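/- Let V : ℝ → ℝ be any function, D > 0, h > 0, and consider the uniform mesh x_i = x₀ + i·h for i ∈ ℤ with Wang–Peskin–Elston jump rates a_{ij} = (D/h²)·A(V(x_j) − V(x_i)) between nearest neighbors. Then the discrete Gibbs–Boltzmann weights p_i = exp(−V(x_i)) form a stationary solution of the master equation: for every i ∈ ℤ, a_{i−1,i}·p_{i−1} − (a_{i,i−1} + a_{i,i+1})·p_i + a_{i+1,i}·p_{i+1} = 0. -/

import Mathlib

open Real

/-- The Wang–Peskin–Elston weight function: `A(u) = u / (exp u - 1)` for `u ≠ 0`,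
and `A(0) = 1`. -/
noncomputable def wpeA (u : ℝ) : ℝ :=
  if u = 0 then 1 else u / (Real.exp u - 1)

/-! Stationarity is discrete detailed balance: the reflection law `A(-u) = eᵘ A(u)` makes the
flux `a_{ij} p_i` between neighbouring mesh points symmetric in `i, j`, so the two incoming and
two outgoing terms of the master equation cancel in pairs. -/

theorem wpeA_neg (u : ℝ) : wpeA (-u) = exp u * wpeA u := by
  unfold wpeA
  rcases eq_or_ne u 0 with rfl | hu
  · simp
  have hexp : exp u - 1 ≠ 0 := sub_ne_zero.mpr (by simpa using hu)
  have hexp_neg : exp (-u) - 1 ≠ 0 := sub_ne_zero.mpr (by simpa using hu)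
  rw [if_neg (neg_ne_zero.mpr hu), if_neg hu, div_eq_iff hexp_neg, exp_neg]
  field_simp
  ring

theorem wpeA_sub_mul_exp_neg (a b : ℝ) :
    wpeA (b - a) * exp (-a) = wpeA (a - b) * exp (-b) := by
  rw [← neg_sub b a, wpeA_neg, mul_comm (exp _), mul_assoc, ← exp_add]
  ring_nf

theorem wpe_gibbs_boltzmann_stationary_general (V : ℝ → ℝ) (D h x₀ : ℝ) :
    ∀ i : ℤ,
      (D / h ^ 2 * wpeA (V (x₀ + (i : ℝ) * h) - V (x₀ + ((i : ℤ) - 1 : ℤ) * h))) *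
          Real.exp (-V (x₀ + ((i : ℤ) - 1 : ℤ) * h))
        - (D / h ^ 2 * wpeA (V (x₀ + ((i : ℤ) - 1 : ℤ) * h) - V (x₀ + (i : ℝ) * h))
            + D / h ^ 2 * wpeA (V (x₀ + ((i : ℤ) + 1 : ℤ) * h) - V (x₀ + (i : ℝ) * h))) *
          Real.exp (-V (x₀ + (i : ℝ) * h))
        + (D / h ^ 2 * wpeA (V (x₀ + (i : ℝ) * h) - V (x₀ + ((i : ℤ) + 1 : ℤ) * h))) *
          Real.exp (-V (x₀ + ((i : ℤ) + 1 : ℤ) * h)) = 0 := by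
  intro i
  have flux_left := wpeA_sub_mul_exp_neg (V (x₀ + ((i : ℤ) - 1 : ℤ) * h)) (V (x₀ + (i : ℝ) * h))
  have flux_right := wpeA_sub_mul_exp_neg (V (x₀ + ((i : ℤ) + 1 : ℤ) * h)) (V (x₀ + (i : ℝ) * h))
  linear_combination (D / h ^ 2) * (flux_left + flux_right)

/-- On the uniform mesh `x_i = x₀ + i h` with Wang–Peskin–Elston jump rates
`a_{ij} = (D/h²) A(V(x_j) − V(x_i))`, the discrete Gibbs–Boltzmann weights
`p_i = exp(−V(x_i))` are a stationary solution of the master equation. -/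
theorem wpe_gibbs_boltzmann_stationary (V : ℝ → ℝ) (D h x₀ : ℝ)
    (hD : 0 < D) (hh : 0 < h) :
    ∀ i : ℤ,
      (D / h ^ 2 * wpeA (V (x₀ + (i : ℝ) * h) - V (x₀ + ((i : ℤ) - 1 : ℤ) * h))) *
          Real.exp (-V (x₀ + ((i : ℤ) - 1 : ℤ) * h))
        - (D / h ^ 2 * wpeA (V (x₀ + ((i : ℤ) - 1 : ℤ) * h) - V (x₀ + (i : ℝ) * h))
            + D / h ^ 2 * wpeA (V (x₀ + ((i : ℤ) + 1 : ℤ) * h) - V (x₀ + (i : ℝ) * h))) *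
          Real.exp (-V (x₀ + (i : ℝ) * h))
        + (D / h ^ 2 * wpeA (V (x₀ + (i : ℝ) * h) - V (x₀ + ((i : ℤ) + 1 : ℤ) * h))) *
          Real.exp (-V (x₀ + ((i : ℤ) + 1 : ℤ) * h)) = 0 :=
  wpe_gibbs_boltzmann_stationary_general V D h x₀
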